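/- arXiv:1407.5409 — 3 statements merged into one kernel-verified Lean document; each statement's English description precedes it below -/
import Mathlib

section
/- For any finite graph G and any two distinct vertices u, v: M(G,t)·M(G-{u,v},t) - M(G-u,t)·M(G-v,t) = -Σ_{P ∈ P_{u,v}} (-t)^{|P|-1} M(G\P, t)^2, where P_{u,v} is the set of paths in G connecting u and v and |P| denotes the number of vertices of the path P. -/
open scoped Classical
open Finset

/-- Number of matchings with exactly `k` edges in `G`. -/
noncomputable def numMatchings {V : Type*} [Fintype V] (G : SimpleGraph V) (k : ℕ) : ℕ :=
  (G.edgeFinset.powerset.filter (fun M => M.card = k ∧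
    ∀ e ∈ M, ∀ f ∈ M, e ≠ f → ∀ v : V, ¬(v ∈ e ∧ v ∈ f))).card

/-- Matching generating function `M(G,t) = Σ_k m_k(G) t^k`. -/
noncomputable def matchGen {V : Type*} [Fintype V] (G : SimpleGraph V) (t : ℝ) : ℝ :=
  ∑ k ∈ Finset.range (Fintype.card V + 1), (numMatchings G k : ℝ) * t ^ k

/-- Derivative `M'(G,t) = Σ_k k·m_k(G) t^(k-1)`. -/
noncomputable def matchGenDeriv {V : Type*} [Fintype V] (G : SimpleGraph V) (t : ℝ) : ℝ :=
  ∑ k ∈ Finset.range (Fintype.card V + 1), (k : ℝ) * (numMatchings G k : ℝ) * t ^ (k - 1)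

/-- The graph obtained from `G` by deleting all vertices in `S` (kept as isolated
vertices, which does not affect matchings). -/
def deleteVerts {V : Type*} (G : SimpleGraph V) (S : Set V) : SimpleGraph V where
  Adj a b := G.Adj a b ∧ a ∉ S ∧ b ∉ S
  symm := ⟨fun _ _ h => ⟨h.1.symm, h.2.2, h.2.1⟩⟩
  loopless := ⟨fun a h => G.loopless.irrefl a h.1⟩

/-!
Induction on `G` among the graphs on the vertex set `V`, ordered by inclusion. If `u` has no
neighbour, both sides vanish. Otherwise pick an edge `ua`. The recurrence
`M(G) = M(G - ua) + t M(G - u - a)` turns the left side for `(G, u, v)` into the left side for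
`(G - ua, u, v)` minus `t` times the left side for `(G - u, a, v)`. Splitting the `u`–`v` paths
of `G` into those avoiding `ua` and those of the form `u :: q`, with `q` an `a`–`v` path of
`G - u`, gives the same recurrence for the path sums. When `a = v` the second term is the single
path `uv`.
-/

open SimpleGraph

section deleteVerts

variable {V : Type*} {G : SimpleGraph V} {S T : Set V}

@[simp]
lemma deleteVerts_adj {x y : V} : (deleteVerts G S).Adj x y ↔ G.Adj x y ∧ x ∉ S ∧ y ∉ S :=
  Iff.rfl

lemma deleteVerts_le : deleteVerts G S ≤ G := fun _ _ h => h.1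

lemma deleteVerts_deleteVerts : deleteVerts (deleteVerts G S) T = deleteVerts G (S ∪ T) := by
  ext x y
  simp only [deleteVerts_adj, Set.mem_union]
  tauto

lemma deleteVerts_insert {x : V} :
    deleteVerts G (insert x S) = deleteVerts (deleteVerts G {x}) S := by
  rw [deleteVerts_deleteVerts, Set.singleton_union]

lemma deleteEdges_deleteVerts (s : Set (Sym2 V)) :
    (deleteVerts G S).deleteEdges s = deleteVerts (G.deleteEdges s) S := by
  ext x y
  simp only [deleteEdges_adj, deleteVerts_adj]
  tauto

lemma deleteVerts_deleteEdges_of_mem {e : Sym2 V} {z : V} (hz : z ∈ e) (hzS : z ∈ S) :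
    deleteVerts (G.deleteEdges {e}) S = deleteVerts G S := by
  ext x y
  simp only [deleteVerts_adj, deleteEdges_adj, Set.mem_singleton_iff]
  refine ⟨fun h => ⟨h.1.1, h.2⟩, fun ⟨hxy, hx, hy⟩ => ⟨⟨hxy, ?_⟩, hx, hy⟩⟩
  rintro rfl
  rcases Sym2.mem_iff.1 hz with rfl | rfl <;> contradiction

lemma mem_edgeSet_deleteVerts {e : Sym2 V} :
    e ∈ (deleteVerts G S).edgeSet ↔ e ∈ G.edgeSet ∧ ∀ z ∈ e, z ∉ S := by
  induction e using Sym2.ind with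
  | _ x y => simp [Sym2.mem_iff, or_imp, forall_and]

lemma deleteVerts_lt {x y : V} (hxy : G.Adj x y) : deleteVerts G {x} < G :=
  lt_of_le_of_ne deleteVerts_le fun h => (h.symm ▸ hxy : (deleteVerts G {x}).Adj x y).2.1 rfl

lemma deleteEdges_lt {x y : V} (hxy : G.Adj x y) : G.deleteEdges {s(x, y)} < G :=
  lt_of_le_of_ne (G.deleteEdges_le _) fun h =>
    (deleteEdges_adj.1 (h.symm ▸ hxy : (G.deleteEdges {s(x, y)}).Adj x y)).2 rfl

end deleteVerts

section matchings

variable {V : Type*} [Fintype V] {G : SimpleGraph V}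

noncomputable def matchings (G : SimpleGraph V) : Finset (Finset (Sym2 V)) :=
  G.edgeFinset.powerset.filter fun M =>
    (M : Set (Sym2 V)).Pairwise fun e f => ∀ v : V, ¬(v ∈ e ∧ v ∈ f)

lemma card_le_of_mem_matchings {M : Finset (Sym2 V)} (hM : M ∈ matchings G) :
    M.card ≤ Fintype.card V := by
  rw [matchings, mem_filter] at hM
  refine (Finset.card_le_card_of_injOn (fun e => e.out.1) (fun _ _ => mem_univ _) ?_).trans_eq
    (card_univ)
  intro e he f hf hef
  by_contra hne
  have hef : e.out.1 = f.out.1 := hef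
  exact hM.2 he hf hne _ ⟨Sym2.out_fst_mem e, hef ▸ Sym2.out_fst_mem f⟩

lemma matchGen_eq_sum_matchings (t : ℝ) : matchGen G t = ∑ M ∈ matchings G, t ^ M.card := by
  rw [matchGen, ← Finset.sum_fiberwise_of_maps_to (g := Finset.card)
    (fun M hM => mem_range.2 (Nat.lt_succ_of_le (card_le_of_mem_matchings hM)))]
  refine Finset.sum_congr rfl fun k _ => ?_
  rw [Finset.sum_congr rfl fun M hM => by rw [(mem_filter.1 hM).2], sum_const, nsmul_eq_mul,
    numMatchings, matchings, filter_filter]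
  simp only [and_comm, Set.Pairwise, mem_coe]

lemma matchings_deleteEdges (e : Sym2 V) :
    matchings (G.deleteEdges {e}) = (matchings G).filter (e ∉ ·) := by
  ext M
  simp only [matchings, mem_filter, mem_powerset, subset_iff, mem_edgeFinset, edgeSet_deleteEdges,
    Set.mem_sdiff, Set.mem_singleton_iff]
  constructor
  · rintro ⟨hsub, hM⟩
    exact ⟨⟨fun f hf => (hsub hf).1, hM⟩, fun he => (hsub he).2 rfl⟩
  · rintro ⟨⟨hsub, hM⟩, he⟩
    exact ⟨fun f hf => ⟨hsub hf, fun hfe => he (hfe ▸ hf)⟩, hM⟩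

lemma insert_mem_matchings_iff {a b : V} (hab : G.Adj a b) {N : Finset (Sym2 V)}
    (hN : s(a, b) ∉ N) :
    insert s(a, b) N ∈ matchings G ↔ N ∈ matchings (deleteVerts G {a, b}) := by
  simp only [matchings, mem_filter, mem_powerset, coe_insert, Set.pairwise_insert,
    subset_iff, mem_edgeFinset, mem_edgeSet_deleteVerts, mem_coe]
  have hdisj_iff : ∀ f ∈ N,
      (s(a, b) ≠ f → (∀ v, ¬(v ∈ s(a, b) ∧ v ∈ f)) ∧ ∀ v, ¬(v ∈ f ∧ v ∈ s(a, b))) ↔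
        ∀ z ∈ f, z ∉ ({a, b} : Set V) := by
    intro f hf
    have : s(a, b) ≠ f := fun h => hN (h ▸ hf)
    simp only [Sym2.mem_iff, Set.mem_insert_iff, Set.mem_singleton_iff]
    grind
  constructor
  · rintro ⟨hsub, hM, hdisj⟩
    exact ⟨fun f hf => ⟨hsub (mem_insert_of_mem hf), (hdisj_iff f hf).1 (hdisj f hf)⟩, hM⟩
  · rintro ⟨hsub, hM⟩
    refine ⟨fun f hf => ?_, hM, fun f hf => (hdisj_iff f hf).2 (hsub hf).2⟩
    rcases mem_insert.1 hf with rfl | hf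
    · exact hab
    · exact (hsub hf).1

lemma matchGen_eq_deleteEdges_add {a b : V} (hab : G.Adj a b) (t : ℝ) :
    matchGen G t =
      matchGen (G.deleteEdges {s(a, b)}) t + t * matchGen (deleteVerts G {a, b}) t := by
  simp only [matchGen_eq_sum_matchings, matchings_deleteEdges, mul_sum]
  rw [← sum_filter_add_sum_filter_not (matchings G) (s(a, b) ∈ ·), add_comm]
  congr 1
  have hnot : ∀ N ∈ matchings (deleteVerts G {a, b}), s(a, b) ∉ N := fun N hN he =>
    (mem_edgeSet_deleteVerts.1 (mem_edgeFinset.1 (mem_powerset.1 (mem_filter.1 hN).1 he))).2 a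
      (Sym2.mem_mk_left a b) (Set.mem_insert a _)
  refine sum_nbij' (fun M => M.erase s(a, b)) (insert s(a, b)) ?_ ?_ ?_ ?_ ?_
  · intro M hM
    rw [mem_filter] at hM
    rw [← insert_mem_matchings_iff hab (notMem_erase _ _), insert_erase hM.2]
    exact hM.1
  · intro N hN
    exact mem_filter.2 ⟨(insert_mem_matchings_iff hab (hnot N hN)).2 hN, mem_insert_self _ _⟩
  · intro M hM
    exact insert_erase (mem_filter.1 hM).2
  · intro N hN
    exact erase_insert (hnot N hN)
  · intro M hM
    rw [← pow_succ', card_erase_add_one (mem_filter.1 hM).2]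
end matchings

section paths

variable {V : Type*} {G : SimpleGraph V} {u a v : V}

lemma SimpleGraph.Walk.mapLe_transfer {H : SimpleGraph V} {x y : V} (p : G.Walk x y)
    (hp : ∀ e ∈ p.edges, e ∈ H.edgeSet) (h : H ≤ G) : (p.transfer H hp).mapLe h = p := by
  rw [Walk.mapLe, ← Walk.transfer_eq_map_ofLE, Walk.transfer_transfer, Walk.transfer_self]
  exact fun e he => p.edges_subset_edgeSet (by simpa using he)

lemma SimpleGraph.Walk.edges_subset_edgeSet_deleteVerts {S : Set V} {x y : V} (p : G.Walk x y)
    (hp : ∀ z ∈ p.support, z ∉ S) : ∀ e ∈ p.edges, e ∈ (deleteVerts G S).edgeSet := fun _ he =>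
  mem_edgeSet_deleteVerts.2
    ⟨p.edges_subset_edgeSet he, fun _ hz => hp _ (Walk.mem_support_of_mem_edges he hz)⟩

lemma SimpleGraph.Walk.notMem_of_mem_support_deleteVerts {S : Set V} {x y z : V}
    (p : (deleteVerts G S).Walk x y) (hx : x ∉ S) (hz : z ∈ p.support) : z ∉ S := by
  induction p with
  | nil =>
    rw [Walk.support_nil, List.mem_singleton] at hz
    rwa [hz]
  | cons h p ih =>
    rcases List.mem_cons.1 hz with rfl | hz
    · exact hx
    · exact ih h.2.2 hz

/-- A path from `u` to `v` either avoids the edge `ua`, or starts with it and continues in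
`G - u`. -/
def pathSplit (hua : G.Adj u a) :
    (G.deleteEdges {s(u, a)}).Path u v ⊕ (deleteVerts G {u}).Path a v → G.Path u v :=
  Sum.elim (SimpleGraph.Path.map (Hom.ofLE (G.deleteEdges_le _)) Function.injective_id) fun q =>
    ⟨.cons hua (q.1.mapLe deleteVerts_le), (q.2.mapLe _).cons fun hu =>
      q.1.notMem_of_mem_support_deleteVerts hua.ne' (by simpa using hu) rfl⟩

lemma pathSplit_bijective (hua : G.Adj u a) (huv : u ≠ v) :
    Function.Bijective (pathSplit (v := v) hua) := by
  refine ⟨Function.Injective.sumElim (SimpleGraph.Path.map_injective _ _ _) ?_ ?_, ?_⟩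
  · intro q q' h
    simp only [Subtype.mk.injEq, Walk.cons.injEq, heq_eq_eq, true_and] at h
    exact Subtype.ext (Walk.map_injective_of_injective Function.injective_id _ _ h)
  · intro p q h
    have hmem : s(u, a) ∈ (p.1.mapLe (G.deleteEdges_le _)).edges := by
      rw [show p.1.mapLe _ = _ from congrArg Subtype.val h]
      simp
    rw [Walk.edges_mapLe_eq_edges] at hmem
    simpa using p.1.edges_subset_edgeSet hmem
  · rintro ⟨_ | ⟨h, q⟩, hw⟩
    · exact absurd rfl huv
    rename_i b
    have hu : u ∉ q.support := ((Walk.cons_isPath_iff h q).1 hw).2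
    by_cases hb : b = a
    · subst hb
      have hq := q.edges_subset_edgeSet_deleteVerts (S := {u}) fun z hz hzu => hu (hzu ▸ hz)
      exact ⟨.inr ⟨q.transfer _ hq, hw.of_cons.transfer hq⟩,
        Subtype.ext (congrArg (Walk.cons h) (q.mapLe_transfer hq _))⟩
    · have he : s(u, a) ∉ (Walk.cons h q).edges := by
        rw [Walk.edges_cons, List.mem_cons, not_or]
        exact ⟨fun h' => hb (Sym2.congr_right.1 h').symm,
          fun h' => hu (q.fst_mem_support_of_mem_edges h')⟩
      exact ⟨.inl ⟨(Walk.cons h q).toDeleteEdge _ he, hw.transfer _⟩,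
        Subtype.ext <| Walk.map_toDeleteEdges_eq {s(u, a)} fun _ he' hes =>
          he (Set.mem_singleton_iff.1 hes ▸ he')⟩

lemma sum_path_eq_sum_deleteEdges_add [Fintype V] {M : Type*} [AddCommMonoid M]
    (hua : G.Adj u a) (huv : u ≠ v) (f : List V → M) :
    ∑ p : G.Path u v, f p.1.support = ∑ p : (G.deleteEdges {s(u, a)}).Path u v, f p.1.support +
      ∑ q : (deleteVerts G {u}).Path a v, f (u :: q.1.support) := by
  rw [← Fintype.sum_bijective _ (pathSplit_bijective hua huv) _ _ fun _ => rfl,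
    Fintype.sum_sum_type]
  simp [pathSplit]

end paths

section identity

variable {V : Type*} [Fintype V] {G : SimpleGraph V} {u a v : V}

noncomputable def matchGenCross (G : SimpleGraph V) (u v : V) (t : ℝ) : ℝ :=
  matchGen G t * matchGen (deleteVerts G {u, v}) t -
    matchGen (deleteVerts G {u}) t * matchGen (deleteVerts G {v}) t

noncomputable def pathWeightSum (G : SimpleGraph V) (u v : V) (t : ℝ) : ℝ :=
  ∑ p : G.Path u v, (-t) ^ (p.1.support.length - 1) *
    matchGen (deleteVerts G {x | x ∈ p.1.support}) t ^ 2

lemma matchGenCross_eq_zero_of_forall_not_adj (hu : ∀ a, ¬G.Adj u a) (v : V) (t : ℝ) :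
    matchGenCross G u v t = 0 := by
  have hG : deleteVerts G {u} = G := by
    ext x y
    simp only [deleteVerts_adj, Set.mem_singleton_iff, and_iff_left_iff_imp]
    intro hxy
    exact ⟨by rintro rfl; exact hu y hxy, by rintro rfl; exact hu x hxy.symm⟩
  rw [matchGenCross, deleteVerts_insert, hG, sub_self]

lemma pathWeightSum_eq_zero_of_forall_not_adj (hu : ∀ a, ¬G.Adj u a) (huv : u ≠ v) (t : ℝ) :
    pathWeightSum G u v t = 0 := by
  have : IsEmpty (G.Path u v) := ⟨fun p => by
    cases p with
    | mk w _ => cases w with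
      | nil => exact huv rfl
      | cons h _ => exact hu _ h⟩
  exact Fintype.sum_empty _

lemma pathWeightSum_self (G : SimpleGraph V) (v : V) (t : ℝ) :
    pathWeightSum G v v t = matchGen (deleteVerts G {v}) t ^ 2 := by
  have : Unique (G.Path v v) := ⟨⟨Path.nil⟩, Path.loop_eq⟩
  rw [pathWeightSum, Fintype.sum_unique, Path.loop_eq default]
  simp

lemma pathWeightSum_eq_deleteEdges_add (hua : G.Adj u a) (huv : u ≠ v) (t : ℝ) :
    pathWeightSum G u v t = pathWeightSum (G.deleteEdges {s(u, a)}) u v t +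
      -t * pathWeightSum (deleteVerts G {u}) a v t := by
  rw [pathWeightSum, sum_path_eq_sum_deleteEdges_add hua huv fun l =>
      (-t) ^ (l.length - 1) * matchGen (deleteVerts G {x | x ∈ l}) t ^ 2,
    pathWeightSum, pathWeightSum, mul_sum]
  refine congrArg₂ (· + ·) ?_ ?_
  · -- the two sums carry different decidability instances for the adjacency of `G - ua`
    refine sum_congr (by congr 1; exact Subsingleton.elim _ _) fun p _ => ?_
    rw [deleteVerts_deleteEdges_of_mem (Sym2.mem_mk_left u a) p.1.start_mem_support]
  · refine sum_congr rfl fun q _ => ?_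
    have hset : {x | x ∈ u :: q.1.support} = insert u {x | x ∈ q.1.support} := by
      ext; simp
    rw [hset, deleteVerts_insert, List.length_cons, q.1.length_support, Nat.add_sub_cancel,
      Nat.add_sub_cancel, pow_succ]
    ring

lemma matchGenCross_eq_deleteEdges_sub (hua : G.Adj u a) (huv : u ≠ v) (hav : a ≠ v) (t : ℝ) :
    matchGenCross G u v t = matchGenCross (G.deleteEdges {s(u, a)}) u v t -
      t * matchGenCross (deleteVerts G {u}) a v t := by
  have hua' : (deleteVerts G {v}).Adj u a := ⟨hua, huv, hav⟩
  simp only [matchGenCross]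
  rw [matchGen_eq_deleteEdges_add hua, matchGen_eq_deleteEdges_add hua',
    deleteEdges_deleteVerts]
  have hG' : ∀ S : Set V, u ∈ S → deleteVerts (G.deleteEdges {s(u, a)}) S = deleteVerts G S :=
    fun _ => deleteVerts_deleteEdges_of_mem (Sym2.mem_mk_left u a)
  simp only [deleteVerts_deleteVerts, Set.singleton_union]
  rw [hG' {u, v} (by simp), hG' {u} rfl, Set.insert_comm v u, Set.pair_comm v a]
  ring

lemma matchGenCross_eq_deleteEdges_add (hua : G.Adj u a) (t : ℝ) :
    matchGenCross G u a t = matchGenCross (G.deleteEdges {s(u, a)}) u a t +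
      t * matchGen (deleteVerts (deleteVerts G {u}) {a}) t ^ 2 := by
  simp only [matchGenCross]
  rw [matchGen_eq_deleteEdges_add hua, deleteVerts_deleteVerts, Set.singleton_union,
    deleteVerts_deleteEdges_of_mem (Sym2.mem_mk_left u a) (by simp),
    deleteVerts_deleteEdges_of_mem (Sym2.mem_mk_left u a) (Set.mem_singleton u),
    deleteVerts_deleteEdges_of_mem (Sym2.mem_mk_right u a) (Set.mem_singleton a)]
  ring

theorem matchGenCross_eq_neg_pathWeightSum (G : SimpleGraph V) {u v : V} (huv : u ≠ v) (t : ℝ) :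
    matchGenCross G u v t = -pathWeightSum G u v t := by
  induction G using WellFoundedLT.induction generalizing u v with
  | _ G ih =>
  by_cases hu : ∀ a, ¬G.Adj u a
  · rw [matchGenCross_eq_zero_of_forall_not_adj hu,
      pathWeightSum_eq_zero_of_forall_not_adj hu huv, neg_zero]
  push Not at hu
  obtain ⟨a, hua⟩ := hu
  have hG' := ih _ (deleteEdges_lt hua) huv
  rw [pathWeightSum_eq_deleteEdges_add hua huv]
  rcases eq_or_ne a v with rfl | hav
  · rw [matchGenCross_eq_deleteEdges_add hua, hG', pathWeightSum_self]
    ring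
  · rw [matchGenCross_eq_deleteEdges_sub hua huv hav, hG', ih _ (deleteVerts_lt hua) hav]
    ring

end identity

theorem stmt2 {V : Type*} [Fintype V] (G : SimpleGraph V) (u v : V) (huv : u ≠ v) (t : ℝ) :
    matchGen G t * matchGen (deleteVerts G {u, v}) t -
        matchGen (deleteVerts G {u}) t * matchGen (deleteVerts G {v}) t =
      -∑ p : G.Path u v,
        (-t) ^ (p.1.support.length - 1) *
          (matchGen (deleteVerts G {x | x ∈ p.1.support}) t) ^ 2 :=
  matchGenCross_eq_neg_pathWeightSum G huv t
end

section
/- Let G = (A,B,E) be a d-regular bipartite graph such that the automorphism group of G acts transitively on A and transitively on B. Then M(G-u,t) = M(G-v,t) for all vertices u, v of G. -/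
open scoped Classical
open Finset

/-! Count the pairs `(u, M)` with `u ∈ A` and `M` a `k`-matching avoiding `u`. A matching of a
bipartite graph covers exactly one vertex of `A` per edge, so
`∑_{u ∈ A} m_k(G - u) = m_k(G) (|A| - k)`. Transitivity on `A` makes all summands equal, whence
`|A| m_k(G - u) = m_k(G) (|A| - k)` for `u ∈ A`, and likewise for `B`. Regularity gives
`|A| d = |B| d`, so `|A| = |B|` unless `d = 0`, when `G` has no edges at all. -/

namespace SimpleGraph

variable {V W : Type*} {G : SimpleGraph V} {H : SimpleGraph W}

noncomputable def matchingsOfCard [Fintype V] (G : SimpleGraph V) (k : ℕ) :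
    Finset (Finset (Sym2 V)) :=
  G.edgeFinset.powerset.filter (fun M => M.card = k ∧
    ∀ e ∈ M, ∀ f ∈ M, e ≠ f → ∀ v : V, ¬(v ∈ e ∧ v ∈ f))

lemma card_matchingsOfCard [Fintype V] (G : SimpleGraph V) (k : ℕ) :
    #(G.matchingsOfCard k) = numMatchings G k := rfl

lemma mem_matchingsOfCard [Fintype V] {k : ℕ} {M : Finset (Sym2 V)} :
    M ∈ G.matchingsOfCard k ↔ (∀ e ∈ M, e ∈ G.edgeSet) ∧ #M = k ∧
      ∀ e ∈ M, ∀ f ∈ M, e ≠ f → ∀ v : V, ¬(v ∈ e ∧ v ∈ f) := by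
  simp [matchingsOfCard, subset_iff]

lemma Embedding.image_mem_matchingsOfCard [Fintype V] [Fintype W] (φ : G ↪g H) {k : ℕ}
    {M : Finset (Sym2 V)} (hM : M ∈ G.matchingsOfCard k) :
    M.image (Sym2.map φ) ∈ H.matchingsOfCard k := by
  obtain ⟨hsub, hcard, hdisj⟩ := mem_matchingsOfCard.mp hM
  refine mem_matchingsOfCard.mpr ⟨?_, ?_, ?_⟩
  · simpa using fun e he => φ.map_mem_edgeSet_iff.mpr (hsub e he)
  · rwa [card_image_of_injective _ (Sym2.map.injective φ.injective)]
  · simp only [mem_image, forall_exists_index, and_imp, forall_apply_eq_imp_iff₂]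
    rintro e he f hf hne v ⟨hve, hvf⟩
    obtain ⟨a, ha, rfl⟩ := Sym2.mem_map.mp hve
    obtain ⟨b, hb, hab⟩ := Sym2.mem_map.mp hvf
    rw [φ.injective hab] at hb
    exact hdisj e he f hf (fun h => hne (h ▸ rfl)) a ⟨ha, hb⟩

lemma Iso.numMatchings_eq [Fintype V] [Fintype W] (φ : G ≃g H) (k : ℕ) :
    numMatchings G k = numMatchings H k := by
  rw [← card_matchingsOfCard, ← card_matchingsOfCard]
  refine card_nbij' (·.image (Sym2.map φ)) (·.image (Sym2.map φ.symm))
    (fun M hM => φ.toEmbedding.image_mem_matchingsOfCard hM)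
    (fun M hM => φ.symm.toEmbedding.image_mem_matchingsOfCard hM) ?_ ?_ <;>
  · intro M _
    simp [image_image, Sym2.map_map, Function.comp_def]

def Iso.deleteVerts (φ : G ≃g H) (S : Set V) : deleteVerts G S ≃g deleteVerts H (φ '' S) where
  toEquiv := φ.toEquiv
  map_rel_iff' {a b} := by
    change H.Adj (φ a) (φ b) ∧ φ a ∉ φ '' S ∧ φ b ∉ φ '' S ↔ G.Adj a b ∧ a ∉ S ∧ b ∉ S
    rw [φ.map_adj_iff, φ.injective.mem_set_image, φ.injective.mem_set_image]

lemma mem_edgeSet_deleteVerts_singleton {u : V} {e : Sym2 V} :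
    e ∈ (deleteVerts G {u}).edgeSet ↔ e ∈ G.edgeSet ∧ u ∉ e := by
  induction e using Sym2.ind with
  | _ x y => simp [_root_.deleteVerts, eq_comm]

lemma matchingsOfCard_deleteVerts_singleton [Fintype V] (G : SimpleGraph V) (u : V) (k : ℕ) :
    (deleteVerts G {u}).matchingsOfCard k = (G.matchingsOfCard k).filter (∀ e ∈ ·, u ∉ e) := by
  ext M
  simp only [mem_matchingsOfCard, mem_filter, mem_edgeSet_deleteVerts_singleton]
  grind

lemma card_filter_mem_of_mem_edgeSet {A : Finset V} (hside : ∀ ⦃x y⦄, G.Adj x y → (x ∈ A ↔ y ∉ A))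
    {e : Sym2 V} (he : e ∈ G.edgeSet) : #(A.filter (· ∈ e)) = 1 := by
  induction e using Sym2.ind with
  | _ x y =>
    have hxy := hside he
    rw [card_eq_one]
    by_cases hx : x ∈ A
    · exact ⟨x, by ext; grind⟩
    · exact ⟨y, by ext; grind⟩

lemma card_filter_forall_notMem_of_mem_matchingsOfCard [Fintype V] {A : Finset V}
    (hside : ∀ ⦃x y⦄, G.Adj x y → (x ∈ A ↔ y ∉ A)) {k : ℕ} {M : Finset (Sym2 V)}
    (hM : M ∈ G.matchingsOfCard k) : #(A.filter (fun u => ∀ e ∈ M, u ∉ e)) = #A - k := by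
  obtain ⟨hsub, rfl, hdisj⟩ := mem_matchingsOfCard.mp hM
  have huncovered :
      A.filter (fun u => ∀ e ∈ M, u ∉ e) = A \ M.biUnion (fun e => A.filter (· ∈ e)) := by
    ext; simp +contextual
  rw [huncovered, card_sdiff_of_subset (biUnion_subset.mpr fun _ _ => filter_subset _ _),
    card_biUnion, sum_congr rfl fun e he => card_filter_mem_of_mem_edgeSet hside (hsub e he),
    sum_const, smul_eq_mul, mul_one]
  exact fun e he f hf hne => disjoint_filter.mpr fun v _ hve hvf => hdisj e he f hf hne v ⟨hve, hvf⟩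

lemma sum_numMatchings_deleteVerts_singleton [Fintype V] {A : Finset V}
    (hside : ∀ ⦃x y⦄, G.Adj x y → (x ∈ A ↔ y ∉ A)) (k : ℕ) :
    ∑ u ∈ A, numMatchings (deleteVerts G {u}) k = numMatchings G k * (#A - k) := by
  simp_rw [← card_matchingsOfCard, matchingsOfCard_deleteVerts_singleton]
  calc ∑ u ∈ A, #((G.matchingsOfCard k).filter (∀ e ∈ ·, u ∉ e))
      = ∑ M ∈ G.matchingsOfCard k, #(A.filter (fun u => ∀ e ∈ M, u ∉ e)) :=
        sum_card_bipartiteAbove_eq_sum_card_bipartiteBelow _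
    _ = #(G.matchingsOfCard k) * (#A - k) := by
        rw [sum_congr rfl fun M hM => card_filter_forall_notMem_of_mem_matchingsOfCard hside hM,
          sum_const, smul_eq_mul]

lemma card_mul_numMatchings_deleteVerts_singleton [Fintype V] {A : Finset V}
    (hside : ∀ ⦃x y⦄, G.Adj x y → (x ∈ A ↔ y ∉ A))
    (htrans : ∀ u ∈ A, ∀ u' ∈ A, ∃ φ : G ≃g G, φ u = u') {u : V} (hu : u ∈ A) (k : ℕ) :
    #A * numMatchings (deleteVerts G {u}) k = numMatchings G k * (#A - k) := by
  rw [← sum_numMatchings_deleteVerts_singleton hside, ← smul_eq_mul, ← sum_const]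
  refine sum_congr rfl fun u' hu' => ?_
  obtain ⟨φ, rfl⟩ := htrans u hu u' hu'
  simpa only [Set.image_singleton] using (φ.deleteVerts {u}).numMatchings_eq k

lemma IsBipartiteWith.mem_iff_notMem_of_adj {s t : Set V} (h : G.IsBipartiteWith s t)
    ⦃x y : V⦄ (hxy : G.Adj x y) : x ∈ s ↔ y ∉ s := by
  rcases h.mem_of_adj hxy with ⟨hx, hy⟩ | ⟨hx, hy⟩
  · exact iff_of_true hx (Set.disjoint_right.mp h.disjoint hy)
  · exact iff_of_false (Set.disjoint_right.mp h.disjoint hx) (not_not_intro hy)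

lemma IsBipartiteWith.card_eq_of_isRegularOfDegree [Fintype V] {s t : Finset V} {d : ℕ}
    (h : G.IsBipartiteWith s t) (hreg : G.IsRegularOfDegree d) (hd : d ≠ 0) : #s = #t := by
  have hsum := isBipartiteWith_sum_degrees_eq h
  simp only [hreg.degree_eq, sum_const, smul_eq_mul] at hsum
  exact Nat.eq_of_mul_eq_mul_right (Nat.pos_of_ne_zero hd) hsum

lemma IsRegularOfDegree.eq_bot [Fintype V] (h : G.IsRegularOfDegree 0) : G = ⊥ := by
  ext x y
  refine iff_of_false (fun hxy => ?_) id
  have := (G.degree_pos_iff_exists_adj x).mpr ⟨y, hxy⟩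
  rw [h.degree_eq] at this
  exact lt_irrefl 0 this

end SimpleGraph

open SimpleGraph

theorem stmt4 {V : Type*} [Fintype V] (G : SimpleGraph V) (d : ℕ) (A B : Finset V)
    (hcover : A ∪ B = Finset.univ) (hdisj : Disjoint A B)
    (hedges : ∀ a b : V, G.Adj a b → (a ∈ A ↔ b ∈ B))
    (hreg : G.IsRegularOfDegree d)
    (hA : ∀ u ∈ A, ∀ u' ∈ A, ∃ φ : G ≃g G, φ u = u')
    (hB : ∀ v ∈ B, ∀ v' ∈ B, ∃ φ : G ≃g G, φ v = v') :
    ∀ u v : V, ∀ t : ℝ, matchGen (deleteVerts G {u}) t = matchGen (deleteVerts G {v}) t := by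
  have hmem : ∀ w, w ∈ A ∨ w ∈ B := fun w => mem_union.mp (hcover ▸ mem_univ w)
  have hbip : G.IsBipartiteWith A B := by
    refine ⟨disjoint_coe.mpr hdisj, fun x y hxy => ?_⟩
    rcases hmem x with hx | hx
    · exact Or.inl ⟨hx, (hedges x y hxy).mp hx⟩
    · exact Or.inr ⟨hx, (hedges y x hxy.symm).mpr hx⟩
  intro u v t
  rcases eq_or_ne d 0 with rfl | hd
  · obtain rfl := hreg.eq_bot
    congr 1
    ext
    simp [deleteVerts]
  have hAB := hbip.card_eq_of_isRegularOfDegree hreg hd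
  have key : ∀ w k, #A * numMatchings (deleteVerts G {w}) k = numMatchings G k * (#A - k) := by
    intro w k
    rcases hmem w with hw | hw
    · exact card_mul_numMatchings_deleteVerts_singleton hbip.mem_iff_notMem_of_adj hA hw k
    · rw [hAB]
      exact card_mul_numMatchings_deleteVerts_singleton hbip.symm.mem_iff_notMem_of_adj hB hw k
  have hApos : 0 < #A := by
    rcases hmem u with hu | hu
    · exact card_pos.mpr ⟨u, hu⟩
    · exact hAB ▸ card_pos.mpr ⟨u, hu⟩
  refine sum_congr rfl fun k _ => ?_
  rw [Nat.eq_of_mul_eq_mul_left hApos ((key u k).trans (key v k).symm)]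
end

section
/- Let G be a d-regular bipartite graph on 2n vertices with an edge e = (u,v), and let p(e) = m_{n-1}(G-{u,v})/m_n(G) be the probability that a uniform random perfect matching contains e (assume m_n(G) > 0). Then there exists a d-regular bipartite graph G* on 2(dn+1) vertices with s(G*) ≥ (1/(d(dn+1)))·(1/p(e) - 1), where s(H) = m_{m-1}(H)/(m·m_m(H)) for a graph H on 2m vertices. -/
open scoped Classical
open Finset

/-!
Glue `d` copies of `G - uv` to two new vertices `u*`, `v*` as described. In a perfect matching of
`G*` each copy contains at most `n` of its edges, and at most `n - 1` if `u*` or `v*` is matched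
into it. Counting the `dn + 1` edges then forces `u*` and `v*` into one and the same copy, which
carries a perfect matching of `G - {u, v}`, while every other copy carries one of `G - uv`. Hence
`m_{dn+1}(G*) ≤ d · m_{n-1}(G - {u, v}) · m_n(G - uv)^(d-1)`, while perfect matchings of `G - uv`
in all copies give `m_{dn}(G*) ≥ m_n(G - uv)^d`. As `m_n(G) = m_{n-1}(G - {u, v}) + m_n(G - uv)`,
the quotient `m_n(G - uv) / m_{n-1}(G - {u, v})` is exactly `1/p(e) - 1`.
-/

section Matchings

variable {V : Type*}

def IsEdgeMatching (G : SimpleGraph V) (M : Finset (Sym2 V)) : Prop :=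
  (∀ e ∈ M, e ∈ G.edgeSet) ∧
    ∀ e ∈ M, ∀ f ∈ M, e ≠ f → ∀ x : V, ¬(x ∈ e ∧ x ∈ f)

theorem notMem_of_vertexDisjoint {M : Finset (Sym2 V)} {e : Sym2 V}
    (hdisj : ∀ f ∈ M, ∀ x ∈ f, x ∉ e) : e ∉ M :=
  fun he => hdisj e he e.out.1 (Sym2.out_fst_mem e) (Sym2.out_fst_mem e)

namespace IsEdgeMatching

variable {G H : SimpleGraph V} {M : Finset (Sym2 V)}

theorem eq_of_mem (hM : IsEdgeMatching G M) {e f : Sym2 V} {x : V} (he : e ∈ M) (hf : f ∈ M)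
    (hxe : x ∈ e) (hxf : x ∈ f) : e = f :=
  by_contra fun hne => hM.2 e he f hf hne x ⟨hxe, hxf⟩

theorem insert [DecidableEq V] (hM : IsEdgeMatching G M) {e : Sym2 V} (he : e ∈ G.edgeSet)
    (hdisj : ∀ f ∈ M, ∀ x ∈ f, x ∉ e) : IsEdgeMatching G (insert e M) := by
  refine ⟨fun f hf => ?_, fun f hf g hg hfg x hx => ?_⟩
  · rcases Finset.mem_insert.mp hf with rfl | hf
    · exact he
    · exact hM.1 f hf
  · rcases Finset.mem_insert.mp hf with rfl | hfM <;>
      rcases Finset.mem_insert.mp hg with rfl | hgM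
    · exact hfg rfl
    · exact hdisj g hgM x hx.2 hx.1
    · exact hdisj f hfM x hx.1 hx.2
    · exact hM.2 f hfM g hgM hfg x hx

theorem subset (hM : IsEdgeMatching G M) {N : Finset (Sym2 V)} (hNM : N ⊆ M) :
    IsEdgeMatching G N :=
  ⟨fun e he => hM.1 e (hNM he), fun e he f hf => hM.2 e (hNM he) f (hNM hf)⟩

theorem forall_notMem_of_mem_erase [DecidableEq V] (hM : IsEdgeMatching G M) {e : Sym2 V}
    (he : e ∈ M) :
    ∀ f ∈ M.erase e, ∀ x ∈ f, x ∉ e := fun _ hf _ hxf hxe =>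
  Finset.ne_of_mem_erase hf (hM.eq_of_mem (Finset.mem_of_mem_erase hf) he hxf hxe)

theorem mono (hM : IsEdgeMatching G M) (hGH : G ≤ H) : IsEdgeMatching H M :=
  ⟨fun e he => SimpleGraph.edgeSet_mono hGH (hM.1 e he), hM.2⟩

theorem two_mul_card_add_card_le [Fintype V] [DecidableEq V] (hM : IsEdgeMatching G M)
    (S : Finset V) (hS : ∀ e ∈ M, ∀ x ∈ e, x ∉ S) : 2 * #M + #S ≤ Fintype.card V := by
  have hcard : #(M.biUnion Sym2.toFinset) = 2 * #M := by
    rw [card_biUnion fun e he f hf hef => Finset.disjoint_left.mpr fun x hxe hxf =>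
      hM.2 e he f hf hef x ⟨Sym2.mem_toFinset.mp hxe, Sym2.mem_toFinset.mp hxf⟩]
    rw [sum_congr rfl fun e he => (Sym2.card_toFinset e).trans
      (if_neg (G.not_isDiag_of_mem_edgeSet (hM.1 e he))), sum_const, smul_eq_mul, mul_comm]
  have hdisj : Disjoint (M.biUnion Sym2.toFinset) S := Finset.disjoint_left.mpr fun x hx =>
    let ⟨e, he, hxe⟩ := mem_biUnion.mp hx; hS e he x (Sym2.mem_toFinset.mp hxe)
  rw [← hcard, ← card_union_of_disjoint hdisj]
  exact card_le_univ _

theorem image {W : Type*} {G' : SimpleGraph W} (hM : IsEdgeMatching G M)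
    (f : G ↪g G') : IsEdgeMatching G' (M.image (Sym2.map f)) := by
  simp only [IsEdgeMatching, forall_mem_image]
  refine ⟨fun e he => ?_, fun e he e' he' hne y ⟨hy, hy'⟩ => ?_⟩
  · induction e using Sym2.ind with
    | _ a b => simpa using hM.1 _ he
  · obtain ⟨x, hx, rfl⟩ := Sym2.mem_map.mp hy
    obtain ⟨x', hx', hxx'⟩ := Sym2.mem_map.mp hy'
    exact hM.2 e he e' he' (fun h => hne (h ▸ rfl)) x ⟨hx, f.injective hxx' ▸ hx'⟩

end IsEdgeMatching

variable {G : SimpleGraph V} {M : Finset (Sym2 V)}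

theorem isEdgeMatching_deleteVerts {S : Set V} :
    IsEdgeMatching (deleteVerts G S) M ↔
      IsEdgeMatching G M ∧ ∀ e ∈ M, ∀ x ∈ e, x ∉ S := by
  have hedge (e : Sym2 V) :
      e ∈ (deleteVerts G S).edgeSet ↔ e ∈ G.edgeSet ∧ ∀ x ∈ e, x ∉ S := by
    induction e using Sym2.ind with
    | _ a b => simp [deleteVerts]
  simp only [IsEdgeMatching, hedge]
  grind

theorem isEdgeMatching_deleteEdges {e : Sym2 V} :
    IsEdgeMatching (G.deleteEdges {e}) M ↔ IsEdgeMatching G M ∧ e ∉ M := by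
  simp only [IsEdgeMatching, SimpleGraph.edgeSet_deleteEdges, Set.mem_sdiff,
    Set.mem_singleton_iff]
  grind

end Matchings

section Counting

variable {V : Type*} [Fintype V] {G : SimpleGraph V} {M : Finset (Sym2 V)} {k : ℕ}

noncomputable def matchingFinset (G : SimpleGraph V) (k : ℕ) : Finset (Finset (Sym2 V)) :=
  G.edgeFinset.powerset.filter (fun M => M.card = k ∧
    ∀ e ∈ M, ∀ f ∈ M, e ≠ f → ∀ v : V, ¬(v ∈ e ∧ v ∈ f))

theorem numMatchings_eq_card (G : SimpleGraph V) (k : ℕ) :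
    numMatchings G k = #(matchingFinset G k) := rfl

theorem mem_matchingFinset : M ∈ matchingFinset G k ↔ IsEdgeMatching G M ∧ #M = k := by
  simp only [matchingFinset, mem_filter, mem_powerset, subset_iff, SimpleGraph.mem_edgeFinset,
    IsEdgeMatching]
  tauto

theorem numMatchings_le_of_embedding {W : Type*} [Fintype W] {G' : SimpleGraph W}
    (f : G ↪g G') (k : ℕ) : numMatchings G k ≤ numMatchings G' k := by
  have hinj : Function.Injective (Sym2.map f) := Sym2.map.injective f.injective
  refine card_le_card_of_injOn (fun M => M.image (Sym2.map f)) (fun M hM => ?_)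
    (fun M _ N _ h => image_injective hinj h)
  obtain ⟨hMatch, hcard⟩ := mem_matchingFinset.mp hM
  exact mem_matchingFinset.mpr ⟨hMatch.image f, (card_image_of_injective M hinj).trans hcard⟩

theorem SimpleGraph.Iso.numMatchings_eq_s18 {W : Type*} [Fintype W] {G' : SimpleGraph W}
    (f : G ≃g G') (k : ℕ) : numMatchings G k = numMatchings G' k :=
  (numMatchings_le_of_embedding f.toEmbedding k).antisymm
    (numMatchings_le_of_embedding f.symm.toEmbedding k)

theorem numMatchings_succ_eq_add {u v : V} (huv : G.Adj u v) (k : ℕ) :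
    numMatchings G (k + 1) =
      numMatchings (deleteVerts G {u, v}) k + numMatchings (G.deleteEdges {s(u, v)}) (k + 1) := by
  have hdisj :
      ∀ N ∈ matchingFinset (deleteVerts G {u, v}) k, ∀ f ∈ N, ∀ x ∈ f, x ∉ s(u, v) :=
    fun N hN f hf x hx hxuv => (isEdgeMatching_deleteVerts.mp (mem_matchingFinset.mp hN).1).2
      f hf x hx (by simpa [Sym2.mem_iff] using hxuv)
  rw [numMatchings_eq_card, ← card_filter_add_card_filter_not (p := (s(u, v) ∈ ·))]
  congr 1
  · refine (card_nbij' (·.erase s(u, v)) (insert s(u, v)) (fun M hM => ?_) (fun N hN => ?_)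
      (fun M hM => insert_erase (mem_filter.mp hM).2)
      (fun N hN => erase_insert (notMem_of_vertexDisjoint (hdisj N hN)))).trans
      (numMatchings_eq_card _ _).symm
    · obtain ⟨hM, he⟩ := mem_filter.mp hM
      obtain ⟨hMatch, hcard⟩ := mem_matchingFinset.mp hM
      refine mem_matchingFinset.mpr ⟨isEdgeMatching_deleteVerts.mpr
        ⟨hMatch.subset (erase_subset _ _), fun f hf x hxf hx => ?_⟩, ?_⟩
      · exact hMatch.forall_notMem_of_mem_erase he f hf x hxf (by simpa [Sym2.mem_iff] using hx)
      · rw [card_erase_of_mem he, hcard, Nat.add_sub_cancel]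
    · obtain ⟨hMatch, hcard⟩ := mem_matchingFinset.mp hN
      refine mem_filter.mpr ⟨mem_matchingFinset.mpr ⟨?_, ?_⟩, mem_insert_self _ _⟩
      · exact (isEdgeMatching_deleteVerts.mp hMatch).1.insert huv (hdisj N hN)
      · rw [card_insert_of_notMem (notMem_of_vertexDisjoint (hdisj N hN)), hcard]
  · rw [numMatchings_eq_card]
    congr 1
    ext M
    simp only [mem_filter, mem_matchingFinset, isEdgeMatching_deleteEdges]
    tauto

end Counting

/-- The vertex count behind perfect matchings of `G*`: `a j` is the number of edges inside copy
`j` and `A t` the set of copies into which the new vertex `t` is matched. -/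
theorem exists_forall_eq_singleton_of_le_sum {ι : Type*} [Fintype ι] [DecidableEq ι] {n : ℕ}
    (a : ι → ℕ) (A : Fin 2 → Finset ι) (hA : ∀ t, #(A t) ≤ 1)
    (hcopy : ∀ j, 2 * a j + #{t | j ∈ A t} ≤ 2 * n)
    (htotal : Fintype.card ι * n + 1 ≤ ∑ j, a j + ∑ t, #(A t)) :
    ∃ i, (∀ t, A t = {i}) ∧ a i + 1 = n ∧ ∀ j ≠ i, a j = n := by
  have hdouble : ∑ j, #{t | j ∈ A t} = ∑ t, #(A t) := by
    simpa [bipartiteAbove, bipartiteBelow] using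
      sum_card_bipartiteAbove_eq_sum_card_bipartiteBelow (fun j t => j ∈ A t)
        (s := univ) (t := univ)
  have hexpand : ∑ j, (2 * a j + #{t | j ∈ A t}) = 2 * ∑ j, a j + ∑ t, #(A t) := by
    rw [sum_add_distrib, ← mul_sum, hdouble]
  have hconst : ∑ _j : ι, 2 * n = 2 * (Fintype.card ι * n) := by
    rw [sum_const, card_univ, smul_eq_mul]; ring
  have hsum := sum_le_sum fun j (_ : j ∈ univ) => hcopy j
  rw [hexpand, hconst] at hsum
  have hA1 : ∀ t, #(A t) = 1 := by
    have h0 := hA 0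
    have h1 := hA 1
    rw [Fin.sum_univ_two] at hsum htotal
    intro t; fin_cases t <;> simp <;> omega
  have htight : ∀ j, 2 * a j + #{t | j ∈ A t} = 2 * n := by
    refine fun j => (sum_eq_sum_iff_of_le fun j _ => hcopy j).mp ?_ j (mem_univ j)
    have hA2 : ∑ t, #(A t) = 2 := by simp [hA1]
    rw [hexpand, hconst]
    omega
  obtain ⟨i, hi⟩ := card_eq_one.mp (hA1 0)
  have hiA : ∀ t, i ∈ A t := by
    have hpos : 0 < #{t | i ∈ A t} := card_pos.mpr ⟨0, by simp [hi]⟩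
    have hle : #{t | i ∈ A t} ≤ 2 := by simpa using card_le_univ {t | i ∈ A t}
    have hcard : #{t | i ∈ A t} = Fintype.card (Fin 2) := by have := htight i; simp; omega
    simpa [filter_eq_self] using (card_eq_iff_eq_univ _).mp hcard
  have hAi : ∀ t, A t = {i} := fun t =>
    eq_singleton_iff_unique_mem.mpr ⟨hiA t, fun j hj => card_le_one.mp (hA t) j hj i (hiA t)⟩
  refine ⟨i, hAi, ?_, fun j hj => ?_⟩
  · have := htight i
    simp only [hAi, mem_singleton, filter_true, card_univ, Fintype.card_fin] at this
    omega
  · have := htight j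
    simp only [hAi, mem_singleton, hj, filter_false, card_empty] at this
    omega

section Gadget

variable {V : Type*} (G : SimpleGraph V) (u v : V) (d : ℕ)

/-- The graph `G*`: `Sum.inl (j, a)` is the copy of `a` in the `j`-th copy of `G - uv`,
`Sum.inr 0` is `u*` (joined to every copy of `v`) and `Sum.inr 1` is `v*`. -/
def gadget : SimpleGraph ((Fin d × V) ⊕ Fin 2) where
  Adj
    | .inl (i, a), .inl (j, b) => i = j ∧ (G.deleteEdges {s(u, v)}).Adj a b
    | .inl (_, a), .inr t | .inr t, .inl (_, a) => a = ![v, u] t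
    | .inr _, .inr _ => False
  symm := ⟨by
    rintro (⟨i, a⟩ | s) (⟨j, b⟩ | t) h
    · exact ⟨h.1.symm, h.2.symm⟩
    all_goals exact h⟩
  loopless := ⟨by rintro (⟨i, a⟩ | t) h; exacts [h.2.ne rfl, h]⟩

variable {G u v d}

@[simp] theorem gadget_adj_inl_inl {i j : Fin d} {a b : V} :
    (gadget G u v d).Adj (.inl (i, a)) (.inl (j, b)) ↔
      i = j ∧ (G.deleteEdges {s(u, v)}).Adj a b :=
  Iff.rfl

@[simp] theorem gadget_adj_inl_inr {j : Fin d} {a : V} {t : Fin 2} :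
    (gadget G u v d).Adj (.inl (j, a)) (.inr t) ↔ a = ![v, u] t := Iff.rfl

@[simp] theorem gadget_adj_inr_inl {j : Fin d} {a : V} {t : Fin 2} :
    (gadget G u v d).Adj (.inr t) (.inl (j, a)) ↔ a = ![v, u] t := Iff.rfl

@[simp] theorem not_gadget_adj_inr_inr {s t : Fin 2} : ¬(gadget G u v d).Adj (.inr s) (.inr t) :=
  id

def gadgetProj (huv : G.Adj u v) : gadget G u v d →g G where
  toFun := Sum.elim Prod.snd ![u, v]
  map_rel' := by
    rintro (⟨i, a⟩ | s) (⟨j, b⟩ | t) h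
    · exact (SimpleGraph.deleteEdges_adj.mp h.2).1
    · fin_cases t <;> simp_all [huv.symm]
    · fin_cases s <;> simp_all [huv.symm]
    · exact absurd h not_gadget_adj_inr_inr

@[simp] theorem gadgetProj_inl (huv : G.Adj u v) (j : Fin d) (a : V) :
    gadgetProj huv (.inl (j, a)) = a := rfl

@[simp] theorem gadgetProj_inr (huv : G.Adj u v) (t : Fin 2) :
    gadgetProj (d := d) huv (.inr t) = ![u, v] t := rfl

theorem card_gadget [Fintype V] {n : ℕ} (hV : Fintype.card V = 2 * n) :
    Fintype.card ((Fin d × V) ⊕ Fin 2) = 2 * (d * n + 1) := by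
  simp [hV]; ring

/-- Around a vertex of a copy, `gadgetProj` is a bijection of neighbourhoods: the missing edge
`uv` is replaced by the edge to `u*` or `v*`. -/
theorem gadget_isRegularOfDegree [Fintype V] (hreg : G.IsRegularOfDegree d) (huv : G.Adj u v) :
    (gadget G u v d).IsRegularOfDegree d := by
  rintro (⟨j, a⟩ | t)
  · refine (?_ : (gadget G u v d).degree (.inl (j, a)) = G.degree a).trans (hreg.degree_eq a)
    refine card_nbij (gadgetProj huv) (fun x hx => ?_) ?_ ?_
    · exact (G.mem_neighborFinset _ _).mpr
        ((gadgetProj huv).map_adj ((SimpleGraph.mem_neighborFinset _ _ _).mp hx))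
    · rintro (⟨k, b⟩ | s) hx (⟨k', b'⟩ | s') hy hxy
      · simp_all
      all_goals (try fin_cases s) <;> (try fin_cases s') <;> simp_all [huv.ne, huv.ne']
    · intro b hb
      rw [mem_coe, SimpleGraph.mem_neighborFinset] at hb
      by_cases hab : s(a, b) = s(u, v)
      · obtain ⟨rfl, rfl⟩ | ⟨rfl, rfl⟩ := Sym2.eq_iff.mp hab
        · exact ⟨.inr 1, by simp, rfl⟩
        · exact ⟨.inr 0, by simp, rfl⟩
      · exact ⟨.inl (j, b), by simp [hb, hab], rfl⟩
  · refine (card_nbij (fun j : Fin d => .inl (j, ![v, u] t)) (fun j _ => by simp)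
      (fun j _ k _ h => by simpa using h) ?_).symm.trans (card_fin d)
    rintro (⟨k, b⟩ | s) hx
    · exact ⟨k, mem_coe.mpr (mem_univ k), by simp_all⟩
    · simp at hx

def copyEdge (j : Fin d) : Sym2 V → Sym2 ((Fin d × V) ⊕ Fin 2) :=
  Sym2.map (Sum.inl ∘ Prod.mk j)

def hubEdge (u v : V) (j : Fin d) (t : Fin 2) : Sym2 ((Fin d × V) ⊕ Fin 2) :=
  s(.inr t, .inl (j, ![v, u] t))

theorem mem_copyEdge {j : Fin d} {e : Sym2 V} {x : (Fin d × V) ⊕ Fin 2} :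
    x ∈ copyEdge j e ↔ ∃ a ∈ e, .inl (j, a) = x := Sym2.mem_map

theorem mem_hubEdge {j : Fin d} {t : Fin 2} {x : (Fin d × V) ⊕ Fin 2} :
    x ∈ hubEdge u v j t ↔ x = .inr t ∨ x = .inl (j, ![v, u] t) := Sym2.mem_iff

theorem copyEdge_eq_copyEdge_iff {j k : Fin d} {e f : Sym2 V} :
    copyEdge j e = copyEdge k f ↔ j = k ∧ e = f := by
  refine ⟨fun h => ?_, fun ⟨hjk, hef⟩ => hjk ▸ hef ▸ rfl⟩
  obtain ⟨a, -, ha⟩ := mem_copyEdge.mp (h ▸ mem_copyEdge.mpr ⟨_, e.out_fst_mem, rfl⟩)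
  obtain rfl : k = j := (Prod.mk.inj (Sum.inl_injective ha)).1
  exact ⟨rfl, Sym2.map.injective ((Sum.inl_injective).comp (Prod.mk_right_injective k)) h⟩

theorem inr_notMem_copyEdge {j : Fin d} {e : Sym2 V} {t : Fin 2} :
    .inr t ∉ copyEdge j e := by
  simp [mem_copyEdge]

theorem copyEdge_mem_edgeSet_iff {j : Fin d} {e : Sym2 V} :
    copyEdge j e ∈ (gadget G u v d).edgeSet ↔ e ∈ (G.deleteEdges {s(u, v)}).edgeSet := by
  induction e using Sym2.ind with
  | _ a b => simp [copyEdge]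

theorem hubEdge_mem_edgeSet (j : Fin d) (t : Fin 2) :
    hubEdge u v j t ∈ (gadget G u v d).edgeSet := by
  simp [hubEdge]

theorem exists_of_mem_edgeSet_gadget {E : Sym2 ((Fin d × V) ⊕ Fin 2)}
    (hE : E ∈ (gadget G u v d).edgeSet) :
    (∃ j e, copyEdge j e = E ∧ e ∈ (G.deleteEdges {s(u, v)}).edgeSet) ∨
      ∃ j t, hubEdge u v j t = E := by
  induction E using Sym2.ind with
  | _ x y =>
    rcases x with ⟨i, a⟩ | s <;> rcases y with ⟨j, b⟩ | t
    · obtain ⟨rfl, hab⟩ := hE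
      exact .inl ⟨i, s(a, b), rfl, hab⟩
    · exact .inr ⟨i, t, by rw [show a = ![v, u] t from hE]; exact Sym2.eq_swap⟩
    · exact .inr ⟨j, s, by rw [show b = ![v, u] s from hE]; rfl⟩
    · simp at hE

theorem IsEdgeMatching.card_hubEdge_mem_le_one {M : Finset (Sym2 ((Fin d × V) ⊕ Fin 2))}
    (hM : IsEdgeMatching (gadget G u v d) M) (t : Fin 2) : #{j | hubEdge u v j t ∈ M} ≤ 1 := by
  refine card_le_one.mpr fun j hj k hk => ?_
  have heq := hM.eq_of_mem (mem_filter.mp hj).2 (mem_filter.mp hk).2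
    (mem_hubEdge.mpr (.inl rfl)) (mem_hubEdge.mpr (.inl rfl))
  simpa [hubEdge] using heq

noncomputable def glue (f : Fin d → Finset (Sym2 V)) : Finset (Sym2 ((Fin d × V) ⊕ Fin 2)) :=
  univ.biUnion fun j => (f j).image (copyEdge j)

theorem mem_glue {f : Fin d → Finset (Sym2 V)} {E : Sym2 ((Fin d × V) ⊕ Fin 2)} :
    E ∈ glue f ↔ ∃ j, ∃ e ∈ f j, copyEdge j e = E := by
  simp [glue]

theorem card_glue (f : Fin d → Finset (Sym2 V)) : #(glue f) = ∑ j, #(f j) := by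
  rw [glue, card_biUnion fun j _ k _ hjk => disjoint_left.mpr fun E hj hk => hjk ?_]
  · exact sum_congr rfl fun j _ =>
      card_image_of_injective _ fun e f h => (copyEdge_eq_copyEdge_iff.mp h).2
  · obtain ⟨e, -, rfl⟩ := mem_image.mp hj
    obtain ⟨e', -, he'⟩ := mem_image.mp hk
    exact (copyEdge_eq_copyEdge_iff.mp he').1.symm

theorem isEdgeMatching_glue {f : Fin d → Finset (Sym2 V)}
    (hf : ∀ j, IsEdgeMatching (G.deleteEdges {s(u, v)}) (f j)) :
    IsEdgeMatching (gadget G u v d) (glue f) := by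
  refine ⟨fun E hE => ?_, fun E hE E' hE' hne x ⟨hx, hx'⟩ => ?_⟩
  · obtain ⟨j, e, he, rfl⟩ := mem_glue.mp hE
    exact copyEdge_mem_edgeSet_iff.mpr ((hf j).1 e he)
  · obtain ⟨j, e, he, rfl⟩ := mem_glue.mp hE
    obtain ⟨j', e', he', rfl⟩ := mem_glue.mp hE'
    obtain ⟨a, ha, rfl⟩ := mem_copyEdge.mp hx
    obtain ⟨a', ha', haa'⟩ := mem_copyEdge.mp hx'
    obtain ⟨rfl, rfl⟩ := Prod.mk.inj (Sum.inl_injective haa')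
    exact (hf _).2 e he e' he' (fun h => hne (h ▸ rfl)) _ ⟨ha, ha'⟩

theorem forall_notMem_hubEdge_of_mem_glue {f : Fin d → Finset (Sym2 V)} {j : Fin d}
    {t : Fin 2} (hf : ∀ e ∈ f j, ![v, u] t ∉ e) :
    ∀ E ∈ glue f, ∀ x ∈ E, x ∉ hubEdge u v j t := by
  intro E hE x hx hxhub
  obtain ⟨k, e, he, rfl⟩ := mem_glue.mp hE
  obtain ⟨a, ha, rfl⟩ := mem_copyEdge.mp hx
  rcases mem_hubEdge.mp hxhub with h | h
  · exact Sum.inl_ne_inr h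
  · obtain ⟨rfl, rfl⟩ := Prod.mk.inj (Sum.inl_injective h)
    exact hf e he ha

end Gadget

section CopyParts

variable {V : Type*} [Fintype V] {G : SimpleGraph V} {u v : V} {d n : ℕ}
  {M : Finset (Sym2 ((Fin d × V) ⊕ Fin 2))}

noncomputable def copyPart (j : Fin d) (M : Finset (Sym2 ((Fin d × V) ⊕ Fin 2))) :
    Finset (Sym2 V) :=
  {e | copyEdge j e ∈ M}

@[simp] theorem mem_copyPart {j : Fin d} {e : Sym2 V} :
    e ∈ copyPart j M ↔ copyEdge j e ∈ M := by
  simp [copyPart]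

theorem isEdgeMatching_copyPart (hM : IsEdgeMatching (gadget G u v d) M) (j : Fin d) :
    IsEdgeMatching (G.deleteEdges {s(u, v)}) (copyPart j M) := by
  refine ⟨fun e he => copyEdge_mem_edgeSet_iff.mp (hM.1 _ (mem_copyPart.mp he)),
    fun e he f hf hef x hx => ?_⟩
  refine hM.2 _ (mem_copyPart.mp he) _ (mem_copyPart.mp hf) (fun h => hef ?_) (.inl (j, x))
    ⟨mem_copyEdge.mpr ⟨x, hx.1, rfl⟩, mem_copyEdge.mpr ⟨x, hx.2, rfl⟩⟩
  exact (copyEdge_eq_copyEdge_iff.mp h).2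

theorem IsEdgeMatching.notMem_of_hubEdge_mem (hM : IsEdgeMatching (gadget G u v d) M)
    {j : Fin d} {t : Fin 2} (hhub : hubEdge u v j t ∈ M) {e : Sym2 V} (he : e ∈ copyPart j M) :
    ![v, u] t ∉ e := fun hx =>
  have heq := hM.eq_of_mem (mem_copyPart.mp he) hhub (mem_copyEdge.mpr ⟨_, hx, rfl⟩)
    (mem_hubEdge.mpr (.inr rfl))
  inr_notMem_copyEdge (heq ▸ mem_hubEdge.mpr (.inl rfl))

theorem card_le_sum_card_copyPart_add (hM : ∀ E ∈ M, E ∈ (gadget G u v d).edgeSet) :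
    #M ≤ ∑ j, #(copyPart j M) + ∑ t, #{j | hubEdge u v j t ∈ M} := by
  have hcover : M ⊆ (univ.biUnion fun j => (copyPart j M).image (copyEdge j)) ∪
      univ.biUnion fun t =>
        ({j | hubEdge u v j t ∈ M} : Finset (Fin d)).image (hubEdge u v · t) := by
    intro E hE
    rcases exists_of_mem_edgeSet_gadget (hM E hE) with ⟨j, e, rfl, -⟩ | ⟨j, t, rfl⟩
    · exact mem_union_left _
        (mem_biUnion.mpr ⟨j, mem_univ j, mem_image_of_mem _ (mem_copyPart.mpr hE)⟩)
    · exact mem_union_right _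
        (mem_biUnion.mpr ⟨t, mem_univ t, mem_image_of_mem _ (by simpa using hE)⟩)
  refine (card_le_card hcover).trans ((card_union_le _ _).trans (add_le_add ?_ ?_))
  all_goals exact card_biUnion_le.trans (sum_le_sum fun _ _ => card_image_le)

theorem IsEdgeMatching.two_mul_card_copyPart_add_le (hM : IsEdgeMatching (gadget G u v d) M)
    (hV : Fintype.card V = 2 * n) (hne : u ≠ v) (j : Fin d) :
    2 * #(copyPart j M) + #{t | hubEdge u v j t ∈ M} ≤ 2 * n := by
  have hinj : Function.Injective ![v, u] := by
    intro s t h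
    fin_cases s <;> fin_cases t <;> simp_all [hne.symm]
  rw [← hV, ← card_image_of_injective _ hinj]
  refine (isEdgeMatching_copyPart hM j).two_mul_card_add_card_le _ fun e he x hx hxS => ?_
  obtain ⟨t, ht, rfl⟩ := mem_image.mp hxS
  exact hM.notMem_of_hubEdge_mem (mem_filter.mp ht).2 he hx

theorem copyPart_glue (f : Fin d → Finset (Sym2 V)) (j : Fin d) :
    copyPart j (glue f) = f j := by
  ext e
  simp [mem_glue, copyEdge_eq_copyEdge_iff]

theorem exists_copy_of_mem_matchingFinset_gadget (hV : Fintype.card V = 2 * n) (hne : u ≠ v)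
    (hM : M ∈ matchingFinset (gadget G u v d) (d * n + 1)) :
    ∃ i, (∀ j t, hubEdge u v j t ∈ M ↔ j = i) ∧
      copyPart i M ∈ matchingFinset (deleteVerts G {u, v}) (n - 1) ∧
      ∀ j ≠ i, copyPart j M ∈ matchingFinset (G.deleteEdges {s(u, v)}) n := by
  obtain ⟨hMatch, hcard⟩ := mem_matchingFinset.mp hM
  obtain ⟨i, hA, hai, haj⟩ := exists_forall_eq_singleton_of_le_sum (fun j => #(copyPart j M))
    (fun t => {j | hubEdge u v j t ∈ M}) hMatch.card_hubEdge_mem_le_one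
    (fun j => by simpa using hMatch.two_mul_card_copyPart_add_le hV hne j)
    (by simpa [hcard] using card_le_sum_card_copyPart_add hMatch.1)
  have hhub : ∀ j t, hubEdge u v j t ∈ M ↔ j = i := fun j t => by
    simpa using congrArg (j ∈ ·) (hA t)
  refine ⟨i, hhub, mem_matchingFinset.mpr ⟨isEdgeMatching_deleteVerts.mpr
    ⟨(isEdgeMatching_copyPart hMatch i).mono (G.deleteEdges_le _), fun e he x hx hxuv => ?_⟩,
    by omega⟩,
    fun j hj => mem_matchingFinset.mpr ⟨isEdgeMatching_copyPart hMatch j, haj j hj⟩⟩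
  rcases hxuv with rfl | rfl
  · exact hMatch.notMem_of_hubEdge_mem ((hhub i 1).mpr rfl) he hx
  · exact hMatch.notMem_of_hubEdge_mem ((hhub i 0).mpr rfl) he hx

theorem subset_of_copyPart_eq (hV : Fintype.card V = 2 * n) (hne : u ≠ v)
    {M' : Finset (Sym2 ((Fin d × V) ⊕ Fin 2))}
    (hM : M ∈ matchingFinset (gadget G u v d) (d * n + 1))
    (hM' : M' ∈ matchingFinset (gadget G u v d) (d * n + 1)) {i : Fin d}
    (hi : hubEdge u v i 0 ∈ M) (hi' : hubEdge u v i 0 ∈ M')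
    (h : ∀ j, copyPart j M = copyPart j M') :
    M ⊆ M' := by
  obtain ⟨k, hk, -⟩ := exists_copy_of_mem_matchingFinset_gadget hV hne hM
  obtain ⟨k', hk', -⟩ := exists_copy_of_mem_matchingFinset_gadget hV hne hM'
  obtain rfl := (hk i 0).mp hi
  obtain rfl := (hk' i 0).mp hi'
  intro E hE
  rcases exists_of_mem_edgeSet_gadget ((mem_matchingFinset.mp hM).1.1 E hE) with
    ⟨j, e, rfl, -⟩ | ⟨j, t, rfl⟩
  · exact mem_copyPart.mp (h j ▸ mem_copyPart.mpr hE)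
  · exact (hk' j t).mpr ((hk j t).mp hE)

theorem numMatchings_gadget_le (hV : Fintype.card V = 2 * n) (hne : u ≠ v) :
    numMatchings (gadget G u v d) (d * n + 1) ≤
      d * (numMatchings (deleteVerts G {u, v}) (n - 1) *
        numMatchings (G.deleteEdges {s(u, v)}) n ^ (d - 1)) := by
  set P := matchingFinset (gadget G u v d) (d * n + 1)
  have hcover : P ⊆ univ.biUnion fun i => {M ∈ P | hubEdge u v i 0 ∈ M} := fun M hM => by
    obtain ⟨i, hi, -⟩ := exists_copy_of_mem_matchingFinset_gadget hV hne hM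
    exact mem_biUnion.mpr ⟨i, mem_univ i, mem_filter.mpr ⟨hM, (hi i 0).mpr rfl⟩⟩
  have hfiber (i : Fin d) : #{M ∈ P | hubEdge u v i 0 ∈ M} ≤
      #(Fintype.piFinset (Function.update (fun _ => matchingFinset (G.deleteEdges {s(u, v)}) n) i
        (matchingFinset (deleteVerts G {u, v}) (n - 1)))) := by
    refine card_le_card_of_injOn (fun M j => copyPart j M) (fun M hM => ?_)
      (fun M hM M' hM' h => ?_)
    · obtain ⟨hMP, hiM⟩ := mem_filter.mp hM
      obtain ⟨k, hk, hki, hkj⟩ := exists_copy_of_mem_matchingFinset_gadget hV hne hMP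
      obtain rfl := (hk i 0).mp hiM
      refine Fintype.mem_piFinset.mpr fun j => ?_
      rcases eq_or_ne j i with rfl | hji
      · simpa using hki
      · simpa [hji] using hkj j hji
    · obtain ⟨hMP, hiM⟩ := mem_filter.mp hM
      obtain ⟨hMP', hiM'⟩ := mem_filter.mp hM'
      have hslices := congrFun h
      exact (subset_of_copyPart_eq hV hne hMP hMP' hiM hiM' hslices).antisymm
        (subset_of_copyPart_eq hV hne hMP' hMP hiM' hiM fun j => (hslices j).symm)
  calc numMatchings (gadget G u v d) (d * n + 1) ≤ ∑ i, #{M ∈ P | hubEdge u v i 0 ∈ M} :=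
        (card_le_card hcover).trans card_biUnion_le
    _ ≤ ∑ i : Fin d, _ := sum_le_sum fun i _ => hfiber i
    _ = _ := by
      simp only [Fintype.card_piFinset, Function.apply_update (fun _ s => #s),
        prod_update_of_mem (mem_univ _), prod_const, card_univ_sdiff]
      simp [numMatchings_eq_card]

theorem pow_le_numMatchings_gadget :
    numMatchings (G.deleteEdges {s(u, v)}) n ^ d ≤ numMatchings (gadget G u v d) (d * n) := by
  calc numMatchings (G.deleteEdges {s(u, v)}) n ^ d
      = #(Fintype.piFinset fun _ : Fin d => matchingFinset (G.deleteEdges {s(u, v)}) n) := by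
        simp [numMatchings_eq_card]
    _ ≤ _ := card_le_card_of_injOn glue (fun f hf => ?_) fun f _ g _ h => funext fun j => by
        rw [← copyPart_glue f j, h, copyPart_glue]
  have hf' := fun j => mem_matchingFinset.mp (Fintype.mem_piFinset.mp hf j)
  refine mem_matchingFinset.mpr ⟨isEdgeMatching_glue fun j => (hf' j).1, ?_⟩
  simp [card_glue, hf']

theorem numMatchings_gadget_pos (hne : u ≠ v) (hd : 0 < d) (hn : 0 < n)
    (hcontain : 0 < numMatchings (deleteVerts G {u, v}) (n - 1))
    (havoid : 0 < numMatchings (G.deleteEdges {s(u, v)}) n) :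
    0 < numMatchings (gadget G u v d) (d * n + 1) := by
  obtain ⟨N', hN'⟩ := card_pos.mp hcontain
  obtain ⟨N, hN⟩ := card_pos.mp havoid
  obtain ⟨hN'match, hN'card⟩ := mem_matchingFinset.mp hN'
  obtain ⟨hNmatch, hNcard⟩ := mem_matchingFinset.mp hN
  obtain ⟨hN'G, hN'uv⟩ := isEdgeMatching_deleteVerts.mp hN'match
  let i : Fin d := ⟨0, hd⟩
  let f := Function.update (fun _ => N) i N'
  have hN'avoid : ∀ t : Fin 2, ∀ e ∈ N', ![v, u] t ∉ e := fun t e he hx =>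
    hN'uv e he _ hx (by fin_cases t <;> simp)
  have hf : ∀ j, IsEdgeMatching (G.deleteEdges {s(u, v)}) (f j) := by
    intro j
    rcases eq_or_ne j i with rfl | hj
    · simpa [f] using isEdgeMatching_deleteEdges.mpr ⟨hN'G, fun h => hN'avoid 1 _ h (by simp)⟩
    · simpa [f, hj] using hNmatch
  have hfi : ∀ t : Fin 2, ∀ e ∈ f i, ![v, u] t ∉ e := by simpa [f] using hN'avoid
  have hdisj1 := forall_notMem_hubEdge_of_mem_glue (hfi 1)
  have hdisj0 :
      ∀ E ∈ insert (hubEdge u v i 1) (glue f), ∀ x ∈ E, x ∉ hubEdge u v i 0 := by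
    refine forall_mem_insert _ _ _ |>.mpr
      ⟨fun x hx => ?_, forall_notMem_hubEdge_of_mem_glue (hfi 0)⟩
    rcases mem_hubEdge.mp hx with rfl | rfl <;> simp [mem_hubEdge, hne]
  refine card_pos.mpr ⟨_, mem_matchingFinset.mpr
    ⟨((isEdgeMatching_glue hf).insert (hubEdge_mem_edgeSet i 1) hdisj1).insert
      (hubEdge_mem_edgeSet i 0) hdisj0, ?_⟩⟩
  rw [card_insert_of_notMem (notMem_of_vertexDisjoint hdisj0),
    card_insert_of_notMem (notMem_of_vertexDisjoint hdisj1), card_glue]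
  simp only [f, Function.apply_update (fun _ s => #s), sum_update_of_mem (mem_univ i), sum_const,
    card_univ_sdiff, card_singleton, Fintype.card_fin, smul_eq_mul, hN'card, hNcard]
  obtain ⟨d, rfl⟩ := Nat.exists_eq_add_of_lt hd
  obtain ⟨n, rfl⟩ := Nat.exists_eq_add_of_lt hn
  simp only [Nat.add_sub_cancel]
  ring

end CopyParts

theorem one_div_mul_one_div_div_sub_one_le {m Q A B d N : ℕ} (hd : 0 < d) (hN : 0 < N)
    (hA : Q ^ d ≤ A) (hB : B ≤ d * (m * Q ^ (d - 1))) (hBpos : 0 < m → 0 < Q → 0 < B) :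
    1 / ((d : ℝ) * N) * (1 / ((m : ℝ) / (m + Q)) - 1) ≤ (A : ℝ) / (N * B) := by
  rcases Nat.eq_zero_or_pos m with rfl | hm
  · simp only [CharP.cast_eq_zero, zero_div, div_zero, zero_sub]
    have : (0 : ℝ) ≤ A / (N * B) := by positivity
    have : (0 : ℝ) < 1 / (d * N) := by positivity
    linarith
  rcases Nat.eq_zero_or_pos Q with rfl | hQ
  · simp [(Nat.cast_pos.mpr hm).ne']
    positivity
  have hB0 : (0 : ℝ) < B := Nat.cast_pos.mpr (hBpos hm hQ)
  have hm0 : (0 : ℝ) < m := Nat.cast_pos.mpr hm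
  have hA' : (Q : ℝ) ^ d ≤ A := by exact_mod_cast hA
  have hB' : (B : ℝ) ≤ d * (m * Q ^ (d - 1)) := by exact_mod_cast hB
  have hpow : (Q : ℝ) ^ (d - 1) * Q = Q ^ d := by rw [← pow_succ, Nat.sub_add_cancel hd]
  have hlhs : 1 / ((d : ℝ) * N) * (1 / ((m : ℝ) / (m + Q)) - 1) = Q / (d * N * m) := by
    field_simp
    ring
  rw [hlhs, div_le_div_iff₀ (by positivity) (by positivity)]
  calc (Q : ℝ) * (N * B) ≤ Q * (N * (d * (m * Q ^ (d - 1)))) := by gcongr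
    _ = d * N * m * (Q ^ (d - 1) * Q) := by ring
    _ ≤ A * (d * N * m) := by rw [hpow, mul_comm]; gcongr

theorem stmt18_general {V : Type*} [Fintype V] (G : SimpleGraph V) (d n : ℕ)
    (hV : Fintype.card V = 2 * n)
    (hreg : G.IsRegularOfDegree d) (hbip : G.Colorable 2)
    (u v : V) (huv : G.Adj u v) :
    ∃ (W : Type) (instW : Fintype W) (H : SimpleGraph W),
      @Fintype.card W instW = 2 * (d * n + 1) ∧
      H.IsRegularOfDegree d ∧ H.Colorable 2 ∧
      (@numMatchings W instW H (d * n) : ℝ) /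
          (((d * n + 1 : ℕ) : ℝ) * (@numMatchings W instW H (d * n + 1) : ℝ)) ≥
        (1 / ((d : ℝ) * ((d * n + 1 : ℕ) : ℝ))) *
          (1 / ((numMatchings (deleteVerts G {u, v}) (n - 1) : ℝ) /
              (numMatchings G n : ℝ)) - 1) := by
  have hne : u ≠ v := huv.ne
  have hd : 0 < d := hreg.degree_eq u ▸ (G.degree_pos_iff_exists_adj u).mpr ⟨v, huv⟩
  have hn : 0 < n := by have := Fintype.card_pos_iff.mpr ⟨u⟩; omega
  have hsplit := numMatchings_succ_eq_add huv (n - 1)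
  rw [Nat.sub_add_cancel hn] at hsplit
  let φ := SimpleGraph.Iso.map (Fintype.equivFinOfCardEq (card_gadget (d := d) hV))
    (gadget G u v d)
  refine ⟨_, inferInstance, _, Fintype.card_fin _, fun x => ?_,
    hbip.of_hom ((gadgetProj huv).comp φ.symm.toHom), ?_⟩
  · convert (φ.degree_eq (φ.symm x)).trans (gadget_isRegularOfDegree hreg huv _)
    exact (φ.apply_symm_apply x).symm
  · rw [← φ.numMatchings_eq_s18, ← φ.numMatchings_eq_s18, hsplit]
    exact_mod_cast one_div_mul_one_div_div_sub_one_le hd (Nat.succ_pos _)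
      pow_le_numMatchings_gadget (numMatchings_gadget_le hV hne)
      (numMatchings_gadget_pos hne hd hn)

theorem stmt18 {V : Type*} [Fintype V] (G : SimpleGraph V) (d n : ℕ)
    (hV : Fintype.card V = 2 * n)
    (hreg : G.IsRegularOfDegree d) (hbip : G.Colorable 2)
    (u v : V) (huv : G.Adj u v) (hpm : 0 < numMatchings G n) :
    ∃ (W : Type) (instW : Fintype W) (H : SimpleGraph W),
      @Fintype.card W instW = 2 * (d * n + 1) ∧
      H.IsRegularOfDegree d ∧ H.Colorable 2 ∧
      (@numMatchings W instW H (d * n) : ℝ) /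
          (((d * n + 1 : ℕ) : ℝ) * (@numMatchings W instW H (d * n + 1) : ℝ)) ≥
        (1 / ((d : ℝ) * ((d * n + 1 : ℕ) : ℝ))) *
          (1 / ((numMatchings (deleteVerts G {u, v}) (n - 1) : ℝ) /
              (numMatchings G n : ℝ)) - 1) :=
  stmt18_general G d n hV hreg hbip u v huv
end
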